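/- Let (Cₙ, dᵢ, sᵢ) be a very weak simplicial module (axioms (1)-(3) of a simplicial module, without any relation between dᵢsᵢ and d_{i+1}sᵢ) and set tᵢ = dᵢsᵢ − d_{i+1}sᵢ : Cₙ → Cₙ. Then: (a) dᵢtⱼ = t_{j−1}dᵢ for i<j, dᵢtᵢ = 0, and dᵢtⱼ = tⱼdᵢ for i>j+1 [suitably interpreted]; (b) tᵢtⱼ = tⱼtᵢ for all i,j; and (c) tᵢsⱼ = sⱼtᵢ for i<j. -/

import Mathlib

/-!
Every identity is obtained by expanding `tⱼ = dⱼsⱼ − d_{j+1}sⱼ` and moving the outer face or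
degeneracy through both summands with the simplicial identities; for `dᵢtᵢ` the two summands
become equal and cancel. Commutativity of `tᵢ` and `tⱼ` for `i < j` then follows by writing
`tⱼtᵢ = dⱼ(sⱼtᵢ) − d_{j+1}(sⱼtᵢ)`, replacing `sⱼtᵢ` by `tᵢsⱼ`, and pulling `tᵢ` out past `dⱼ` and
`d_{j+1}`. This needs `dₗtᵢ = tᵢdₗ` for all `l > i`, including `l = i + 1`.
-/

/-- `tᵢ = dᵢsᵢ − d_{i+1}sᵢ : C_{m+1} → C_{m+1}` (valid for `i ≤ m+1`). -/
def tmap {k : Type*} [CommRing k] {C : ℕ → Type*}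
    [∀ n, AddCommGroup (C n)] [∀ n, Module k (C n)]
    (d : ∀ n, ℕ → (C (n + 1) →ₗ[k] C n))
    (s : ∀ n, ℕ → (C n →ₗ[k] C (n + 1)))
    (m i : ℕ) : C (m + 1) →ₗ[k] C (m + 1) :=
  (d (m + 1) i) ∘ₗ (s (m + 1) i) - (d (m + 1) (i + 1)) ∘ₗ (s (m + 1) i)

namespace VeryWeakSimplicial

open LinearMap

variable {k : Type*} [CommRing k] {C : ℕ → Type*}
    [∀ n, AddCommGroup (C n)] [∀ n, Module k (C n)]
    (d : ∀ n, ℕ → (C (n + 1) →ₗ[k] C n))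
    (s : ∀ n, ℕ → (C n →ₗ[k] C (n + 1)))

def FaceFace : Prop :=
  ∀ n, ∀ i j : ℕ, i < j → j ≤ n + 2 →
    (d n i) ∘ₗ (d (n + 1) j) = (d n (j - 1)) ∘ₗ (d (n + 1) i)

def DegenDegen : Prop :=
  ∀ n, ∀ i j : ℕ, i ≤ j → j ≤ n →
    (s (n + 1) i) ∘ₗ (s n j) = (s (n + 1) (j + 1)) ∘ₗ (s n i)

def FaceDegenLt : Prop :=
  ∀ n, ∀ i j : ℕ, i < j → j ≤ n + 1 →
    (d (n + 1) i) ∘ₗ (s (n + 1) j) = (s n (j - 1)) ∘ₗ (d n i)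

def FaceDegenGt : Prop :=
  ∀ n, ∀ i j : ℕ, j + 1 < i → i ≤ n + 2 →
    (d (n + 1) i) ∘ₗ (s (n + 1) j) = (s n j) ∘ₗ (d n (i - 1))

variable {d s}

theorem FaceFace.comp_succ (hd : FaceFace d) {n i j : ℕ} (hij : i ≤ j) (hj : j ≤ n + 1) :
    (d n i) ∘ₗ (d (n + 1) (j + 1)) = (d n j) ∘ₗ (d (n + 1) i) :=
  hd n i (j + 1) (Nat.lt_succ_of_le hij) (by omega)

theorem FaceDegenLt.comp_succ (hlt : FaceDegenLt d s) {n i j : ℕ} (hij : i ≤ j) (hj : j ≤ n) :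
    (d (n + 1) i) ∘ₗ (s (n + 1) (j + 1)) = (s n j) ∘ₗ (d n i) :=
  hlt n i (j + 1) (Nat.lt_succ_of_le hij) (by omega)

theorem FaceDegenGt.succ_comp (hgt : FaceDegenGt d s) {n i j : ℕ} (hji : j < i) (hi : i ≤ n + 1) :
    (d (n + 1) (i + 1)) ∘ₗ (s (n + 1) j) = (s n j) ∘ₗ (d n i) :=
  hgt n (i + 1) j (by omega) (by omega)

theorem d_comp_tmap_succ (hd : FaceFace d) (hlt : FaceDegenLt d s) {n i j : ℕ}
    (hij : i ≤ j) (hj : j ≤ n + 1) :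
    (d (n + 1) i) ∘ₗ (tmap d s (n + 1) (j + 1)) = (tmap d s n j) ∘ₗ (d (n + 1) i) := by
  simp only [tmap, comp_sub, sub_comp]
  congr 1
  · rw [← comp_assoc, hd.comp_succ hij (by omega), comp_assoc, hlt.comp_succ hij hj,
      ← comp_assoc]
  · rw [← comp_assoc, hd.comp_succ (by omega) (by omega), comp_assoc, hlt.comp_succ hij hj,
      ← comp_assoc]

theorem d_comp_tmap_self (hd : FaceFace d) {n i : ℕ} (hi : i ≤ n + 2) :
    (d (n + 1) i) ∘ₗ (tmap d s (n + 1) i) = 0 := by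
  rw [tmap, comp_sub, ← comp_assoc, ← comp_assoc, hd.comp_succ le_rfl hi, sub_self]

theorem d_comp_tmap_of_lt (hd : FaceFace d) (hgt : FaceDegenGt d s) {n i j : ℕ}
    (hji : j < i) (hi : i ≤ n + 2) :
    (d (n + 1) i) ∘ₗ (tmap d s (n + 1) j) = (tmap d s n j) ∘ₗ (d (n + 1) i) := by
  simp only [tmap, comp_sub, sub_comp]
  congr 1
  · rw [← comp_assoc, ← hd.comp_succ hji.le hi, comp_assoc, hgt.succ_comp hji hi, ← comp_assoc]
  · rw [← comp_assoc, ← hd.comp_succ hji hi, comp_assoc, hgt.succ_comp hji hi, ← comp_assoc]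

theorem tmap_comp_s_of_lt (hs : DegenDegen s) (hlt : FaceDegenLt d s) {m i j : ℕ}
    (hij : i < j) (hj : j ≤ m + 1) :
    (tmap d s (m + 1) i) ∘ₗ (s (m + 1) j) = (s (m + 1) j) ∘ₗ (tmap d s m i) := by
  simp only [tmap, comp_sub, sub_comp]
  congr 1
  · rw [comp_assoc, hs (m + 1) i j hij.le hj, ← comp_assoc, hlt.comp_succ hij.le hj, comp_assoc]
  · rw [comp_assoc, hs (m + 1) i j hij.le hj, ← comp_assoc, hlt.comp_succ hij hj, comp_assoc]

theorem tmap_comp_tmap_of_lt (hd : FaceFace d) (hs : DegenDegen s) (hlt : FaceDegenLt d s)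
    (hgt : FaceDegenGt d s) {m i j : ℕ} (hij : i < j) (hj : j ≤ m + 1) :
    (tmap d s m j) ∘ₗ (tmap d s m i) = (tmap d s m i) ∘ₗ (tmap d s m j) :=
  calc (tmap d s m j) ∘ₗ (tmap d s m i)
      = (d (m + 1) j) ∘ₗ ((s (m + 1) j) ∘ₗ (tmap d s m i))
        - (d (m + 1) (j + 1)) ∘ₗ ((s (m + 1) j) ∘ₗ (tmap d s m i)) := by
        simp only [tmap, sub_comp, comp_assoc]
    _ = ((d (m + 1) j) ∘ₗ (tmap d s (m + 1) i)) ∘ₗ (s (m + 1) j)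
        - ((d (m + 1) (j + 1)) ∘ₗ (tmap d s (m + 1) i)) ∘ₗ (s (m + 1) j) := by
        rw [← tmap_comp_s_of_lt hs hlt hij hj]
        simp only [comp_assoc]
    _ = ((tmap d s m i) ∘ₗ (d (m + 1) j)) ∘ₗ (s (m + 1) j)
        - ((tmap d s m i) ∘ₗ (d (m + 1) (j + 1))) ∘ₗ (s (m + 1) j) := by
        rw [d_comp_tmap_of_lt hd hgt hij (by omega), d_comp_tmap_of_lt hd hgt (by omega) (by omega)]
    _ = (tmap d s m i) ∘ₗ (tmap d s m j) := by
        simp only [tmap, comp_sub, comp_assoc]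

theorem tmap_comm (hd : FaceFace d) (hs : DegenDegen s) (hlt : FaceDegenLt d s)
    (hgt : FaceDegenGt d s) {m i j : ℕ} (hi : i ≤ m + 1) (hj : j ≤ m + 1) :
    (tmap d s m i) ∘ₗ (tmap d s m j) = (tmap d s m j) ∘ₗ (tmap d s m i) := by
  rcases lt_trichotomy i j with hij | rfl | hji
  · exact (tmap_comp_tmap_of_lt hd hs hlt hgt hij hj).symm
  · rfl
  · exact tmap_comp_tmap_of_lt hd hs hlt hgt hji hi

end VeryWeakSimplicial

open VeryWeakSimplicial in
/-- For a very weak simplicial module `(Cₙ, dᵢ, sᵢ)` and `tᵢ = dᵢsᵢ − d_{i+1}sᵢ`: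
(a) `dᵢtⱼ = t_{j−1}dᵢ` for `i < j`, `dᵢtᵢ = 0` and `dᵢtⱼ = tⱼdᵢ` for `i > j+1`;
(b) `tᵢtⱼ = tⱼtᵢ`; (c) `tᵢsⱼ = sⱼtᵢ` for `i < j`. -/
theorem stmt18 {k : Type*} [CommRing k] {C : ℕ → Type*}
    [∀ n, AddCommGroup (C n)] [∀ n, Module k (C n)]
    (d : ∀ n, ℕ → (C (n + 1) →ₗ[k] C n))
    (s : ∀ n, ℕ → (C n →ₗ[k] C (n + 1)))
    (hd : ∀ n, ∀ i j : ℕ, i < j → j ≤ n + 2 →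
      (d n i) ∘ₗ (d (n + 1) j) = (d n (j - 1)) ∘ₗ (d (n + 1) i))
    (hs : ∀ n, ∀ i j : ℕ, i ≤ j → j ≤ n →
      (s (n + 1) i) ∘ₗ (s n j) = (s (n + 1) (j + 1)) ∘ₗ (s n i))
    (hds_lt : ∀ n, ∀ i j : ℕ, i < j → j ≤ n + 1 →
      (d (n + 1) i) ∘ₗ (s (n + 1) j) = (s n (j - 1)) ∘ₗ (d n i))
    (hds_gt : ∀ n, ∀ i j : ℕ, j + 1 < i → i ≤ n + 2 →
      (d (n + 1) i) ∘ₗ (s (n + 1) j) = (s n j) ∘ₗ (d n (i - 1))) :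
    -- (a) dᵢtⱼ = t_{j−1}dᵢ for i < j
    (∀ n, ∀ i j : ℕ, i < j → j ≤ n + 2 →
      (d (n + 1) i) ∘ₗ (tmap d s (n + 1) j) = (tmap d s n (j - 1)) ∘ₗ (d (n + 1) i)) ∧
    -- (a) dᵢtᵢ = 0
    (∀ n, ∀ i : ℕ, i ≤ n + 2 →
      (d (n + 1) i) ∘ₗ (tmap d s (n + 1) i) = 0) ∧
    -- (a) dᵢtⱼ = tⱼdᵢ for i > j + 1
    (∀ n, ∀ i j : ℕ, j + 1 < i → i ≤ n + 2 → j ≤ n + 1 →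
      (d (n + 1) i) ∘ₗ (tmap d s (n + 1) j) = (tmap d s n j) ∘ₗ (d (n + 1) i)) ∧
    -- (b) tᵢtⱼ = tⱼtᵢ
    (∀ m, ∀ i j : ℕ, i ≤ m + 1 → j ≤ m + 1 →
      (tmap d s m i) ∘ₗ (tmap d s m j) = (tmap d s m j) ∘ₗ (tmap d s m i)) ∧
    -- (c) tᵢsⱼ = sⱼtᵢ for i < j
    (∀ m, ∀ i j : ℕ, i < j → j ≤ m + 1 →
      (tmap d s (m + 1) i) ∘ₗ (s (m + 1) j) = (s (m + 1) j) ∘ₗ (tmap d s m i)) := by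
  refine ⟨?_, fun n i hi => d_comp_tmap_self hd hi,
    fun n i j hji hi _ => d_comp_tmap_of_lt hd hds_gt (by omega) hi,
    fun m i j hi hj => tmap_comm hd hs hds_lt hds_gt hi hj,
    fun m i j hij hj => tmap_comp_s_of_lt hs hds_lt hij hj⟩
  intro n i j hij hj
  obtain ⟨j, rfl⟩ : ∃ j', j = j' + 1 := ⟨j - 1, by omega⟩
  exact d_comp_tmap_succ hd hds_lt (Nat.le_of_lt_succ hij) (by omega)
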